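/- arXiv:1601.02238 — 2 statements merged into one kernel-verified Lean document; each statement's English description precedes it below -/
import Mathlib

section
/- Fix λ > 0, μ > 0, c₁ ∈ (0,1), and α, γ ∈ (0,1) with α + γ ≤ 1 and α + γ > 0. Define q₁(i,j) = (Γ(1+1/c₁+λ+μ)/(c₁ Γ(λ+1) Γ(μ))) · (Γ(i+λ+1)/Γ(i+1)) · (Γ(j+μ)/Γ(j+1)) / (Γ(i+j+1/c₁+λ+μ+2)/Γ(i+j+1)) and q₂(i,j) = (Γ(1+1/c₁+λ+μ)/(c₁ Γ(λ) Γ(μ+1))) · (Γ(i+λ)/Γ(i+1)) · (Γ(j+μ+1)/Γ(j+1)) / (Γ(i+j+1/c₁+λ+μ+2)/Γ(i+j+1)), and define p(i,j) = (γ/(α+γ)) q₁(i-1,j) + (α/(α+γ)) q₂(i,j-1) (with the convention that terms with a negative argument vanish). Then for all x, y > 0, lim_{n→∞} p(⌊n x⌋, ⌊n y⌋)/n^{-(2+1/c₁)} = (γ/(α+γ)) (Γ(1+1/c₁+λ+μ)/(c₁ Γ(λ+1) Γ(μ))) x^λ y^{μ-1}/(x+y)^{1+λ+μ+1/c₁}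 + (α/(α+γ)) (Γ(1+1/c₁+λ+μ)/(c₁ Γ(λ) Γ(μ+1))) x^{λ-1} y^μ/(x+y)^{1+λ+μ+1/c₁}. -/
/-!
Wendel's limit `Γ(t + a) / (Γ(t) t^a) → 1` as `t → ∞` holds for every real `a`: for `0 < a < 1`
log-convexity of `Γ` squeezes the ratio between `t / (t + a)` and `1`, and `Γ(t + 1) = t Γ(t)`
moves `a` by integers. So `Γ(s + a) / Γ(s) ≈ s^a`, and once `⌊n x⌋ ≈ n x` is substituted,
each of `q₁(⌊n x⌋ - 1, ⌊n y⌋)` and `q₂(⌊n x⌋, ⌊n y⌋ - 1)` is a product of three such ratios whose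
exponents add up to `-(2 + 1/c₁)`.
-/

open Real Filter Topology

noncomputable def gammaShiftRatio (a t : ℝ) : ℝ := Gamma (t + a) / (Gamma t * t ^ a)

lemma tendsto_add_div_self (c : ℝ) : Tendsto (fun t : ℝ => (t + c) / t) atTop (𝓝 1) := by
  have h : Tendsto (fun t : ℝ => 1 + c * t⁻¹) atTop (𝓝 (1 + c * 0)) :=
    tendsto_const_nhds.add (tendsto_inv_atTop_zero.const_mul c)
  rw [mul_zero, add_zero] at h
  refine h.congr' ?_
  filter_upwards [eventually_ne_atTop 0] with t ht
  field_simp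

lemma gammaShiftRatio_le_one {a t : ℝ} (ht : 0 < t) (ha₀ : 0 < a) (ha₁ : a < 1) :
    gammaShiftRatio a t ≤ 1 := by
  have hΓ := Gamma_pos_of_pos ht
  have hconv := Gamma_mul_add_mul_le_rpow_Gamma_mul_rpow_Gamma ht (by linarith : 0 < t + 1)
    (sub_pos.2 ha₁) ha₀ (sub_add_cancel 1 a)
  rw [show (1 - a) * t + a * (t + 1) = t + a by ring, Gamma_add_one ht.ne',
    mul_rpow ht.le hΓ.le, mul_left_comm, ← rpow_add hΓ, sub_add_cancel, rpow_one] at hconv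
  rw [gammaShiftRatio, div_le_one (by positivity)]
  linarith

lemma div_add_le_gammaShiftRatio {a t : ℝ} (ht : 0 < t) (ha₀ : 0 < a) (ha₁ : a < 1) :
    t / (t + a) ≤ gammaShiftRatio a t := by
  have hta : 0 < t + a := by linarith
  have hΓa := Gamma_pos_of_pos hta
  have hconv := Gamma_mul_add_mul_le_rpow_Gamma_mul_rpow_Gamma hta (by linarith : 0 < t + a + 1)
    ha₀ (sub_pos.2 ha₁) (add_sub_cancel a 1)
  rw [show a * (t + a) + (1 - a) * (t + a + 1) = t + 1 by ring, Gamma_add_one ht.ne',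
    Gamma_add_one hta.ne', mul_rpow hta.le hΓa.le, mul_left_comm, ← rpow_add hΓa,
    add_sub_cancel, rpow_one] at hconv
  have hpow : t ^ a * (t + a) ^ (1 - a) ≤ t + a :=
    calc t ^ a * (t + a) ^ (1 - a) ≤ (t + a) ^ a * (t + a) ^ (1 - a) := by gcongr; linarith
      _ = t + a := by rw [← rpow_add hta, add_sub_cancel, rpow_one]
  rw [gammaShiftRatio, div_le_div_iff₀ hta (by positivity)]
  calc t * (Gamma t * t ^ a) = t * Gamma t * t ^ a := by ring
    _ ≤ (t + a) ^ (1 - a) * Gamma (t + a) * t ^ a := by gcongr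
    _ = Gamma (t + a) * (t ^ a * (t + a) ^ (1 - a)) := by ring
    _ ≤ Gamma (t + a) * (t + a) := by gcongr

lemma tendsto_gammaShiftRatio_of_mem_Ico {a : ℝ} (ha : a ∈ Set.Ico 0 1) :
    Tendsto (gammaShiftRatio a) atTop (𝓝 1) := by
  obtain ⟨ha₀, ha₁⟩ := ha
  rcases ha₀.eq_or_lt with rfl | ha₀
  · refine tendsto_const_nhds.congr' ?_
    filter_upwards [eventually_gt_atTop 0] with t ht
    simp [gammaShiftRatio, (Gamma_pos_of_pos ht).ne']
  have hlower : Tendsto (fun t : ℝ => t / (t + a)) atTop (𝓝 1) := by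
    simpa using (tendsto_add_div_self a).inv₀ one_ne_zero
  refine tendsto_of_tendsto_of_tendsto_of_le_of_le' hlower tendsto_const_nhds ?_ ?_
  · filter_upwards [eventually_gt_atTop 0] with t ht
    exact div_add_le_gammaShiftRatio ht ha₀ ha₁
  · filter_upwards [eventually_gt_atTop 0] with t ht
    exact gammaShiftRatio_le_one ht ha₀ ha₁

lemma gammaShiftRatio_add_one {a t : ℝ} (ht : 0 < t) (hta : 0 < t + a) :
    gammaShiftRatio (a + 1) t = gammaShiftRatio a t * ((t + a) / t) := by
  have hΓ := Gamma_pos_of_pos ht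
  rw [gammaShiftRatio, gammaShiftRatio, ← add_assoc, Gamma_add_one hta.ne', rpow_add ht, rpow_one]
  field_simp

lemma tendsto_gammaShiftRatio_add_one_iff (a : ℝ) :
    Tendsto (gammaShiftRatio (a + 1)) atTop (𝓝 1) ↔ Tendsto (gammaShiftRatio a) atTop (𝓝 1) := by
  have hq := tendsto_add_div_self a
  have heq : gammaShiftRatio (a + 1) =ᶠ[atTop] fun t => gammaShiftRatio a t * ((t + a) / t) := by
    filter_upwards [eventually_gt_atTop 0, eventually_gt_atTop (-a)] with t ht hta
    exact gammaShiftRatio_add_one ht (by linarith)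
  rw [tendsto_congr' heq]
  refine ⟨fun h => ?_, fun h => by simpa using h.mul hq⟩
  have hdiv := h.div hq one_ne_zero
  rw [div_one] at hdiv
  refine hdiv.congr' ?_
  filter_upwards [eventually_gt_atTop 0, eventually_gt_atTop (-a)] with t ht hta
  exact mul_div_cancel_right₀ _ (div_pos (by linarith : 0 < t + a) ht).ne'

theorem tendsto_gammaShiftRatio (a : ℝ) : Tendsto (gammaShiftRatio a) atTop (𝓝 1) := by
  obtain ⟨n, b, hb, rfl⟩ : ∃ n : ℤ, ∃ b ∈ Set.Ico (0 : ℝ) 1, a = n + b :=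
    ⟨⌊a⌋, Int.fract a, ⟨Int.fract_nonneg a, Int.fract_lt_one a⟩, (Int.floor_add_fract a).symm⟩
  induction n using Int.induction_on with
  | zero => simpa using tendsto_gammaShiftRatio_of_mem_Ico hb
  | succ i ih =>
    rw [show ((i + 1 : ℤ) : ℝ) + b = (i : ℤ) + b + 1 by push_cast; ring]
    exact (tendsto_gammaShiftRatio_add_one_iff _).2 ih
  | pred i ih =>
    rw [show ((-i : ℤ) : ℝ) + b = ((-i - 1 : ℤ) : ℝ) + b + 1 by push_cast; ring] at ih
    exact (tendsto_gammaShiftRatio_add_one_iff _).1 ih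

lemma tendsto_atTop_of_tendsto_div_natCast {s : ℕ → ℝ} {x : ℝ} (hx : 0 < x)
    (hs : Tendsto (fun n => s n / n) atTop (𝓝 x)) : Tendsto s atTop atTop := by
  refine (hs.pos_mul_atTop hx tendsto_natCast_atTop_atTop).congr' ?_
  filter_upwards [eventually_ne_atTop 0] with n hn
  field_simp

lemma tendsto_Gamma_add_div_Gamma_div_rpow {s : ℕ → ℝ} {x : ℝ} (hx : 0 < x)
    (hs : Tendsto (fun n => s n / n) atTop (𝓝 x)) (a : ℝ) :
    Tendsto (fun n => Gamma (s n + a) / Gamma (s n) / (n : ℝ) ^ a) atTop (𝓝 (x ^ a)) := by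
  have hs_top := tendsto_atTop_of_tendsto_div_natCast hx hs
  have hlim :=
    ((tendsto_gammaShiftRatio a).comp hs_top).mul (hs.rpow_const (p := a) (Or.inl hx.ne'))
  rw [one_mul] at hlim
  refine hlim.congr' ?_
  filter_upwards [hs_top.eventually_gt_atTop 0, eventually_gt_atTop 0] with n hsn hn
  have hΓ := Gamma_pos_of_pos hsn
  have hsa := rpow_pos_of_pos hsn a
  have hna := rpow_pos_of_pos (Nat.cast_pos.2 hn) a
  rw [Function.comp_apply, gammaShiftRatio, div_rpow hsn.le (Nat.cast_nonneg n)]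
  field_simp

lemma tendsto_Gamma_ratio_div_rpow {r s t : ℕ → ℝ} {x y z : ℝ} (hx : 0 < x) (hy : 0 < y)
    (hz : 0 < z) (hs : Tendsto (fun n => s n / n) atTop (𝓝 x))
    (ht : Tendsto (fun n => t n / n) atTop (𝓝 y)) (hr : Tendsto (fun n => r n / n) atTop (𝓝 z))
    (a b d : ℝ) :
    Tendsto (fun n => Gamma (s n + a) / Gamma (s n) * (Gamma (t n + b) / Gamma (t n)) /
        (Gamma (r n + d) / Gamma (r n)) / (n : ℝ) ^ (a + b - d)) atTop
      (𝓝 (x ^ a * y ^ b / z ^ d)) := by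
  have hlim := ((tendsto_Gamma_add_div_Gamma_div_rpow hx hs a).mul
    (tendsto_Gamma_add_div_Gamma_div_rpow hy ht b)).div
    (tendsto_Gamma_add_div_Gamma_div_rpow hz hr d) (rpow_pos_of_pos hz d).ne'
  refine hlim.congr' ?_
  filter_upwards [eventually_gt_atTop 0] with n hn
  have hn : (0 : ℝ) < n := Nat.cast_pos.2 hn
  rw [Pi.div_apply, rpow_sub hn, rpow_add hn]
  ring

lemma tendsto_natFloor_mul_add_div {x : ℝ} (hx : 0 ≤ x) (c : ℝ) :
    Tendsto (fun n : ℕ => ((⌊(n : ℝ) * x⌋₊ : ℝ) + c) / n) atTop (𝓝 x) := by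
  have h := ((tendsto_nat_floor_mul_div_atTop hx).comp tendsto_natCast_atTop_atTop).add
    (tendsto_const_div_atTop_nhds_zero_nat c)
  rw [add_zero] at h
  refine h.congr fun n => ?_
  rw [Function.comp_apply, mul_comm, add_div]

theorem stmt_8_general
    (lam mu c₁ α γ : ℝ)
    (q₁ q₂ : ℕ → ℕ → ℝ)
    (hq₁ : ∀ i j : ℕ, q₁ i j =
      (Gamma (1 + 1 / c₁ + lam + mu) / (c₁ * Gamma (lam + 1) * Gamma mu)) *
        ((Gamma ((i : ℝ) + lam + 1) / Gamma ((i : ℝ) + 1)) *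
          (Gamma ((j : ℝ) + mu) / Gamma ((j : ℝ) + 1)) /
          (Gamma ((i : ℝ) + (j : ℝ) + 1 / c₁ + lam + mu + 2) /
            Gamma ((i : ℝ) + (j : ℝ) + 1))))
    (hq₂ : ∀ i j : ℕ, q₂ i j =
      (Gamma (1 + 1 / c₁ + lam + mu) / (c₁ * Gamma lam * Gamma (mu + 1))) *
        ((Gamma ((i : ℝ) + lam) / Gamma ((i : ℝ) + 1)) *
          (Gamma ((j : ℝ) + mu + 1) / Gamma ((j : ℝ) + 1)) /
          (Gamma ((i : ℝ) + (j : ℝ) + 1 / c₁ + lam + mu + 2) /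
            Gamma ((i : ℝ) + (j : ℝ) + 1))))
    (p : ℕ → ℕ → ℝ)
    (hp : ∀ i j : ℕ, p i j =
      (if i = 0 then 0 else γ / (α + γ) * q₁ (i - 1) j) +
      (if j = 0 then 0 else α / (α + γ) * q₂ i (j - 1))) :
    ∀ x y : ℝ, 0 < x → 0 < y →
      Tendsto
        (fun n : ℕ => p ⌊(n : ℝ) * x⌋₊ ⌊(n : ℝ) * y⌋₊ /
          (n : ℝ) ^ (-(2 + 1 / c₁)))
        atTop
        (𝓝 (γ / (α + γ) *
              (Gamma (1 + 1 / c₁ + lam + mu) /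
                (c₁ * Gamma (lam + 1) * Gamma mu)) *
              (x ^ lam * y ^ (mu - 1) / (x + y) ^ (1 + lam + mu + 1 / c₁)) +
            α / (α + γ) *
              (Gamma (1 + 1 / c₁ + lam + mu) /
                (c₁ * Gamma lam * Gamma (mu + 1))) *
              (x ^ (lam - 1) * y ^ mu /
                (x + y) ^ (1 + lam + mu + 1 / c₁)))) := by
  intro x y hx hy
  have hI : Tendsto (fun n : ℕ => (⌊(n : ℝ) * x⌋₊ : ℝ) / n) atTop (𝓝 x) := by
    simpa using tendsto_natFloor_mul_add_div hx.le 0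
  have hJ : Tendsto (fun n : ℕ => (⌊(n : ℝ) * y⌋₊ : ℝ) / n) atTop (𝓝 y) := by
    simpa using tendsto_natFloor_mul_add_div hy.le 0
  have hIJ : Tendsto (fun n : ℕ => ((⌊(n : ℝ) * x⌋₊ : ℝ) + ⌊(n : ℝ) * y⌋₊) / n) atTop
      (𝓝 (x + y)) := (hI.add hJ).congr fun n => (add_div _ _ _).symm
  have h₁ := tendsto_Gamma_ratio_div_rpow hx hy (add_pos hx hy) hI
    (tendsto_natFloor_mul_add_div hy.le 1) hIJ lam (mu - 1) (1 + lam + mu + 1 / c₁)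
  have h₂ := tendsto_Gamma_ratio_div_rpow hx hy (add_pos hx hy)
    (tendsto_natFloor_mul_add_div hx.le 1) hJ hIJ (lam - 1) mu (1 + lam + mu + 1 / c₁)
  rw [show lam + (mu - 1) - (1 + lam + mu + 1 / c₁) = -(2 + 1 / c₁) by ring] at h₁
  rw [show lam - 1 + mu - (1 + lam + mu + 1 / c₁) = -(2 + 1 / c₁) by ring] at h₂
  refine ((h₁.const_mul _).add (h₂.const_mul _)).congr' ?_
  filter_upwards [(tendsto_atTop_of_tendsto_div_natCast hx hI).eventually_ge_atTop 1,
    (tendsto_atTop_of_tendsto_div_natCast hy hJ).eventually_ge_atTop 1] with n hIn hJn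
  rw [Nat.one_le_cast] at hIn hJn
  rw [hp, if_neg (by omega), if_neg (by omega), hq₁, hq₂, Nat.cast_sub hIn, Nat.cast_sub hJn,
    Nat.cast_one]
  -- the two sides differ only in how the Gamma arguments are grouped
  ring_nf

/-- regular variation of the asymptotic joint in/out-degree pmf
`p(i,j)` in the standard case `c₁ = c₂` of the preferential attachment model:
`p(⌊n x⌋,⌊n y⌋)/n^{-(2+1/c₁)}` converges to the stated mixture limit. -/
theorem stmt_8
    (lam mu c₁ α γ : ℝ) (hlam : 0 < lam) (hmu : 0 < mu)
    (hc₁ : c₁ ∈ Set.Ioo (0 : ℝ) 1)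
    (hα : α ∈ Set.Ioo (0 : ℝ) 1) (hγ : γ ∈ Set.Ioo (0 : ℝ) 1)
    (hαγ_le : α + γ ≤ 1) (hαγ_pos : 0 < α + γ)
    (q₁ q₂ : ℕ → ℕ → ℝ)
    (hq₁ : ∀ i j : ℕ, q₁ i j =
      (Gamma (1 + 1 / c₁ + lam + mu) / (c₁ * Gamma (lam + 1) * Gamma mu)) *
        ((Gamma ((i : ℝ) + lam + 1) / Gamma ((i : ℝ) + 1)) *
          (Gamma ((j : ℝ) + mu) / Gamma ((j : ℝ) + 1)) /
          (Gamma ((i : ℝ) + (j : ℝ) + 1 / c₁ + lam + mu + 2) /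
            Gamma ((i : ℝ) + (j : ℝ) + 1))))
    (hq₂ : ∀ i j : ℕ, q₂ i j =
      (Gamma (1 + 1 / c₁ + lam + mu) / (c₁ * Gamma lam * Gamma (mu + 1))) *
        ((Gamma ((i : ℝ) + lam) / Gamma ((i : ℝ) + 1)) *
          (Gamma ((j : ℝ) + mu + 1) / Gamma ((j : ℝ) + 1)) /
          (Gamma ((i : ℝ) + (j : ℝ) + 1 / c₁ + lam + mu + 2) /
            Gamma ((i : ℝ) + (j : ℝ) + 1))))
    (p : ℕ → ℕ → ℝ)
    (hp : ∀ i j : ℕ, p i j =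
      (if i = 0 then 0 else γ / (α + γ) * q₁ (i - 1) j) +
      (if j = 0 then 0 else α / (α + γ) * q₂ i (j - 1))) :
    ∀ x y : ℝ, 0 < x → 0 < y →
      Tendsto
        (fun n : ℕ => p ⌊(n : ℝ) * x⌋₊ ⌊(n : ℝ) * y⌋₊ /
          (n : ℝ) ^ (-(2 + 1 / c₁)))
        atTop
        (𝓝 (γ / (α + γ) *
              (Gamma (1 + 1 / c₁ + lam + mu) /
                (c₁ * Gamma (lam + 1) * Gamma mu)) *
              (x ^ lam * y ^ (mu - 1) / (x + y) ^ (1 + lam + mu + 1 / c₁)) +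
            α / (α + γ) *
              (Gamma (1 + 1 / c₁ + lam + mu) /
                (c₁ * Gamma lam * Gamma (mu + 1))) *
              (x ^ (lam - 1) * y ^ mu /
                (x + y) ^ (1 + lam + mu + 1 / c₁)))) :=
  stmt_8_general lam mu c₁ α γ q₁ q₂ hq₁ hq₂ p hp
end

section
/- Fix a norm ‖·‖ on R² and let ℵ₀ = {v ∈ R_+² : ‖v‖ = 1}. Let h : (0,∞) → (0,∞) be regularly varying with index ρ < 0 and let u : Z_+² → R_+ satisfy: there exists λ₀ > 0 on ℵ₀ with lim_{t→∞} u(⌊t x⌋, ⌊t y⌋)/h(t) = λ₀(x,y) for all (x,y) ∈ ℵ₀. Then u is embeddable: the function f : R_+² → R defined by f(x,y) = u(⌊x⌋,⌊y⌋) satisfies lim_{t→∞} f(tx,ty)/h(t) = λ(x,y) = λ₀((x,y)/‖(x,y)‖) · ‖(x,y)‖^ρ for all x,y > 0. -/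
/-!
Write `(x, y) = r • v` with `r = N (x, y)` and `v` on the unit sphere. Then
`f (t x, t y) = u ⌊(t r) v₁⌋ ⌊(t r) v₂⌋`, so the limit along the sphere taken at time `t r`,
combined with `h (t r) / h t → r ^ ρ`, gives the limit `lam₀ v * r ^ ρ`.
-/

open Filter Topology

lemma Seminorm.pos_of_ne_zero {E : Type*} [AddCommGroup E] [Module ℝ E] (N : Seminorm ℝ E)
    (hN : ∀ v, N v = 0 → v = 0) {v : E} (hv : v ≠ 0) : 0 < N v :=
  (apply_nonneg N v).lt_of_ne fun h => hv (hN v h.symm)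

lemma Seminorm.apply_inv_smul_self {E : Type*} [AddCommGroup E] [Module ℝ E] (N : Seminorm ℝ E)
    {v : E} (hv : 0 < N v) : N ((N v)⁻¹ • v) = 1 := by
  rw [map_smul_eq_mul, Real.norm_eq_abs, abs_of_pos (inv_pos.mpr hv), inv_mul_cancel₀ hv.ne']

lemma tendsto_comp_mul_div_of_tendsto_div {g h : ℝ → ℝ} {c L a : ℝ} (hc : 0 < c)
    (hh : ∀ᶠ t in atTop, h t ≠ 0 ∧ h (t * c) ≠ 0)
    (hg : Tendsto (fun s => g s / h s) atTop (𝓝 L))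
    (hRV : Tendsto (fun t => h (t * c) / h t) atTop (𝓝 a)) :
    Tendsto (fun t => g (t * c) / h t) atTop (𝓝 (L * a)) := by
  have hgc : Tendsto (fun t => g (t * c) / h (t * c)) atTop (𝓝 L) :=
    hg.comp (tendsto_id.atTop_mul_const hc)
  refine (hgc.mul hRV).congr' ?_
  filter_upwards [hh] with t ⟨ht, htc⟩
  field_simp

theorem stmt_11_general
    (N : Seminorm ℝ (ℝ × ℝ)) (hN : ∀ v : ℝ × ℝ, N v = 0 → v = 0)
    (h : ℝ → ℝ) (hpos : ∀ t : ℝ, 0 < t → 0 < h t)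
    (ρ : ℝ)
    (hRV : ∀ x : ℝ, 0 < x →
      Tendsto (fun t : ℝ => h (t * x) / h t) atTop (𝓝 (x ^ ρ)))
    (u : ℕ → ℕ → ℝ)
    (lam₀ : ℝ → ℝ → ℝ)
    (hlim : ∀ x y : ℝ, 0 ≤ x → 0 ≤ y → N (x, y) = 1 →
      Tendsto (fun t : ℝ => u ⌊t * x⌋₊ ⌊t * y⌋₊ / h t) atTop
        (𝓝 (lam₀ x y)))
    (f : ℝ → ℝ → ℝ) (hf : ∀ x y : ℝ, f x y = u ⌊x⌋₊ ⌊y⌋₊) :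
    ∀ x y : ℝ, 0 < x → 0 < y →
      Tendsto (fun t : ℝ => f (t * x) (t * y) / h t) atTop
        (𝓝 (lam₀ (x / N (x, y)) (y / N (x, y)) * (N (x, y) : ℝ) ^ ρ)) := by
  intro x y hx hy
  set r := N (x, y)
  have hr : 0 < r := N.pos_of_ne_zero hN (by simp [hx.ne'])
  have hunit : N (x / r, y / r) = 1 := by
    simpa [div_eq_inv_mul] using N.apply_inv_smul_self hr
  have hh : ∀ᶠ t in atTop, h t ≠ 0 ∧ h (t * r) ≠ 0 := by
    filter_upwards [eventually_gt_atTop 0] with t ht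
    exact ⟨(hpos t ht).ne', (hpos _ (mul_pos ht hr)).ne'⟩
  refine (tendsto_comp_mul_div_of_tendsto_div hr hh
    (hlim _ _ (by positivity) (by positivity) hunit) (hRV r hr)).congr fun t => ?_
  have hcancel (z : ℝ) : t * r * (z / r) = t * z := by field_simp
  simp only [hf, hcancel]

/-- under convergence on the unit sphere `ℵ₀`, the mass function
`u` is embeddable: `f(x,y) = u(⌊x⌋,⌊y⌋)` satisfies
`f(tx,ty)/h(t) → λ₀((x,y)/‖(x,y)‖) ‖(x,y)‖^ρ` along real `t → ∞`. -/
theorem stmt_11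
    (N : Seminorm ℝ (ℝ × ℝ)) (hN : ∀ v : ℝ × ℝ, N v = 0 → v = 0)
    (h : ℝ → ℝ) (hpos : ∀ t : ℝ, 0 < t → 0 < h t)
    (ρ : ℝ) (hρ : ρ < 0)
    (hRV : ∀ x : ℝ, 0 < x →
      Tendsto (fun t : ℝ => h (t * x) / h t) atTop (𝓝 (x ^ ρ)))
    (u : ℕ → ℕ → ℝ) (hu_nonneg : ∀ i j, 0 ≤ u i j)
    (lam₀ : ℝ → ℝ → ℝ)
    (hlam₀ : ∀ x y : ℝ, 0 ≤ x → 0 ≤ y → N (x, y) = 1 → 0 < lam₀ x y)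
    (hlim : ∀ x y : ℝ, 0 ≤ x → 0 ≤ y → N (x, y) = 1 →
      Tendsto (fun t : ℝ => u ⌊t * x⌋₊ ⌊t * y⌋₊ / h t) atTop
        (𝓝 (lam₀ x y)))
    (f : ℝ → ℝ → ℝ) (hf : ∀ x y : ℝ, f x y = u ⌊x⌋₊ ⌊y⌋₊) :
    ∀ x y : ℝ, 0 < x → 0 < y →
      Tendsto (fun t : ℝ => f (t * x) (t * y) / h t) atTop
        (𝓝 (lam₀ (x / N (x, y)) (y / N (x, y)) * (N (x, y) : ℝ) ^ ρ)) :=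
  stmt_11_general N hN h hpos ρ hRV u lam₀ hlim f hf
end
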